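/- Let n ≥ 1, let p : 2^[n] → ℂ be a distribution (∑_I p_I = 1), and let J ⊆ [n]. Define p' : 2^[n] → ℂ by p'_I = p_{I Δ J}, where I Δ J = (I∖J) ∪ (J∖I) is the symmetric difference. Let k and k' denote the cumulants of p and p' respectively (computed from their moments μ_I = ∑_{L ⊇ I} p_L via k_I = ∑_{π ∈ Π(I)} (−1)^{|π|−1}(|π|−1)! ∏_{B ∈ π} μ_B). Then for every I with |I| ≥ 2: k'_I = −k_I if |J ∩ I| is odd and k'_I = k_I if |J ∩ I| is even; and for each i ∈ [n]: k'_{{i}} = 1 − k_{{i}} if i ∈ J and k'_{{i}} = k_{{i}} otherwise. -/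

import Mathlib

open Finset

/-- The cumulants of a table `μ` indexed by subsets of `[n]`. -/
noncomputable def cumulant {n : ℕ} (μ : Finset (Fin n) → ℂ) (I : Finset (Fin n)) : ℂ :=
  ∑ π : Finpartition I,
    (-1 : ℂ) ^ (π.parts.card - 1) * (Nat.factorial (π.parts.card - 1) : ℂ) *
      ∏ B ∈ π.parts, μ B

/-- The moments `μ_I = ∑_{L ⊇ I} p_L` of a table `p`. -/
noncomputable def moment {n : ℕ} (p : Finset (Fin n) → ℂ) (I : Finset (Fin n)) : ℂ :=
  ∑ L ∈ univ.filter (fun L => I ⊆ L), p L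

/-!
Flipping bit `j` replaces the coordinate `X_j` by `1 - X_j`, so the moments become
`μ'_B = μ_{B \ j} - μ_B` for `j ∈ B` and `μ'_B = μ_B` otherwise. Since exactly one block of a
partition of `I ∋ j` contains `j`, this gives `k'_I = k̃_I - k_I`, where `k̃` is the cumulant of the
table `B ↦ μ_{B \ j}`, i.e. the joint cumulant with `X_j` replaced by the constant `1`. It vanishes
for `|I| ≥ 2`: group the partitions of `I` by their restriction `σ` to `I \ j`. The fibre of `σ`
consists of `σ ∪ {{j}}`, with coefficient `(-1)^|σ| |σ|!` (its block `{j}` contributes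
`μ_∅ = 1`), and the `|σ|` partitions obtained by adding `j` to a block of `σ`, each with
coefficient `(-1)^(|σ|-1) (|σ|-1)!`, all multiplied by `∏_{B ∈ σ} μ_B`; these cancel.
For singletons `k_i = μ_i` and `μ'_i = 1 - μ_i`. A general `J` is flipped one bit at a time.
-/

namespace Finset

variable {α : Type*} [DecidableEq α] {B M : Finset α} {j : α}

lemma subset_symmDiff_singleton_iff_of_notMem (hj : j ∉ B) : B ⊆ symmDiff M {j} ↔ B ⊆ M := by
  simp only [subset_iff, mem_symmDiff, mem_singleton]
  grind

lemma subset_symmDiff_singleton_iff_of_mem (hj : j ∈ B) :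
    B ⊆ symmDiff M {j} ↔ B.erase j ⊆ M ∧ j ∉ M := by
  simp only [subset_iff, mem_symmDiff, mem_singleton, mem_erase]
  grind

end Finset

namespace Finpartition

variable {α : Type*} [DecidableEq α] {s : Finset α} {j : α}

lemma notMem_of_mem_parts (σ : Finpartition s) (hj : j ∉ s) {B : Finset α} (hB : B ∈ σ.parts) :
    j ∉ B :=
  fun h => hj (σ.le hB h)

lemma notMem_of_mem_erase_part (π : Finpartition s) {B : Finset α}
    (hB : B ∈ π.parts.erase (π.part j)) : j ∉ B := fun hjB =>
  (mem_erase.1 hB).1 (π.part_eq_of_mem (mem_of_mem_erase hB) hjB).symm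

lemma sup_erase_parts (σ : Finpartition s) {C : Finset α} (hC : C ∈ σ.parts) :
    (σ.parts.erase C).sup id = s \ C := by
  have hs : C ∪ (σ.parts.erase C).sup id = s := by
    have h := σ.sup_parts
    rwa [← insert_erase hC, sup_insert] at h
  calc _ = (C ∪ (σ.parts.erase C).sup id) \ C :=
        (union_sdiff_cancel_left (supIndep_iff_disjoint_erase.1 σ.supIndep C hC)).symm
    _ = s \ C := by rw [hs]

def addSingleton (σ : Finpartition s) (hj : j ∉ s) : Finpartition (insert j s) :=
  σ.extend (singleton_ne_empty j) (disjoint_singleton_right.2 hj) (union_singleton j s)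

def insertIntoPart (σ : Finpartition s) (hj : j ∉ s) {C : Finset α} (hC : C ∈ σ.parts) :
    Finpartition (insert j s) :=
  (σ.ofSubset (erase_subset C σ.parts) (σ.sup_erase_parts hC)).extend (insert_ne_empty j C)
    (disjoint_insert_right.2 ⟨fun h => hj (mem_sdiff.1 h).1, sdiff_disjoint⟩)
    (by rw [sup_eq_union, union_insert, sdiff_union_of_subset (σ.le hC)])

section Reinsert

variable (σ : Finpartition s)

@[simp]
lemma parts_addSingleton (hj : j ∉ s) : (σ.addSingleton hj).parts = insert {j} σ.parts := rfl

@[simp]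
lemma parts_insertIntoPart (hj : j ∉ s) {C : Finset α} (hC : C ∈ σ.parts) :
    (σ.insertIntoPart hj hC).parts = insert (insert j C) (σ.parts.erase C) := rfl

lemma part_addSingleton (hj : j ∉ s) : (σ.addSingleton hj).part j = {j} :=
  part_eq_of_mem _ (mem_insert_self _ _) (mem_singleton_self j)

lemma part_insertIntoPart (hj : j ∉ s) {C : Finset α} (hC : C ∈ σ.parts) :
    (σ.insertIntoPart hj hC).part j = insert j C :=
  part_eq_of_mem _ (mem_insert_self _ _) (mem_insert_self j C)

lemma singleton_notMem_parts (hj : j ∉ s) : {j} ∉ σ.parts :=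
  fun h => σ.notMem_of_mem_parts hj h (mem_singleton_self j)

lemma insert_notMem_erase_parts (hj : j ∉ s) (C : Finset α) : insert j C ∉ σ.parts.erase C :=
  fun h => σ.notMem_of_mem_parts hj (mem_of_mem_erase h) (mem_insert_self j C)

lemma card_parts_addSingleton (hj : j ∉ s) : #(σ.addSingleton hj).parts = #σ.parts + 1 :=
  σ.card_extend _ _

lemma card_parts_insertIntoPart (hj : j ∉ s) {C : Finset α} (hC : C ∈ σ.parts) :
    #(σ.insertIntoPart hj hC).parts = #σ.parts := by
  rw [parts_insertIntoPart, card_insert_of_notMem (σ.insert_notMem_erase_parts hj C),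
    card_erase_add_one hC]

lemma addSingleton_ne_insertIntoPart (hj : j ∉ s) {C : Finset α} (hC : C ∈ σ.parts) :
    σ.addSingleton hj ≠ σ.insertIntoPart hj hC := fun h => by
  have hpart := congr_arg (·.part j) h
  simp only [part_addSingleton, part_insertIntoPart] at hpart
  obtain ⟨x, hx⟩ := σ.nonempty_of_mem_parts hC
  have hxj : x = j := mem_singleton.1 (hpart ▸ mem_insert_of_mem hx)
  exact σ.notMem_of_mem_parts hj hC (hxj ▸ hx)

lemma insertIntoPart_injective (hj : j ∉ s) :
    Function.Injective fun C : σ.parts => σ.insertIntoPart hj C.2 := fun C D h => by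
  have hpart := congr_arg (·.part j) h
  simp only [part_insertIntoPart] at hpart
  rw [Subtype.ext_iff, ← erase_insert (σ.notMem_of_mem_parts hj C.2), hpart,
    erase_insert (σ.notMem_of_mem_parts hj D.2)]

end Reinsert

lemma parts_restrict_insert (hj : j ∉ s) (π : Finpartition (insert j s)) :
    (π.restrict (subset_insert j s)).parts =
      (insert ((π.part j).erase j) (π.parts.erase (π.part j))).erase ∅ := by
  have hP : π.part j ∈ π.parts := π.part_mem.2 (mem_insert_self j s)
  have hPs : π.part j ∩ s = (π.part j).erase j := by
    ext x
    have : x ∈ π.part j → x ∈ insert j s := fun h => π.part_subset j h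
    grind
  have hrest : (π.parts.erase (π.part j)).image (· ∩ s) = π.parts.erase (π.part j) := by
    refine (image_congr fun B hB => inter_eq_left.2 ?_).trans image_id
    have := π.notMem_of_mem_erase_part hB
    exact fun x hx => (mem_insert.1 (π.le (mem_of_mem_erase hB) hx)).resolve_left (by grind)
  change (π.parts.image (· ∩ s)).erase ∅ = _
  conv_lhs => rw [← insert_erase hP, image_insert, hPs, hrest]

lemma restrict_addSingleton (σ : Finpartition s) (hj : j ∉ s) :
    (σ.addSingleton hj).restrict (subset_insert j s) = σ := by
  ext1
  rw [parts_restrict_insert hj, part_addSingleton, parts_addSingleton, erase_singleton,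
    erase_insert (σ.singleton_notMem_parts hj), erase_insert σ.empty_notMem_parts]

lemma restrict_insertIntoPart (σ : Finpartition s) (hj : j ∉ s) {C : Finset α}
    (hC : C ∈ σ.parts) : (σ.insertIntoPart hj hC).restrict (subset_insert j s) = σ := by
  ext1
  rw [parts_restrict_insert hj, part_insertIntoPart, parts_insertIntoPart,
    erase_insert (σ.notMem_of_mem_parts hj hC), erase_insert (σ.insert_notMem_erase_parts hj C),
    insert_erase hC, erase_eq_of_notMem σ.empty_notMem_parts]

lemma eq_addSingleton_or_insertIntoPart (hj : j ∉ s) (π : Finpartition (insert j s)) :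
    π = (π.restrict (subset_insert j s)).addSingleton hj ∨
      ∃ C, ∃ hC : C ∈ (π.restrict (subset_insert j s)).parts,
        π = (π.restrict (subset_insert j s)).insertIntoPart hj hC := by
  have hP : π.part j ∈ π.parts := π.part_mem.2 (mem_insert_self j s)
  have hjP : j ∈ π.part j := π.mem_part_self.2 (mem_insert_self j s)
  by_cases hC : (π.part j).erase j = ∅
  · have hPj : π.part j = {j} := by rw [← insert_erase hjP, hC]; rfl
    left
    ext1
    rw [parts_addSingleton, parts_restrict_insert hj, hC, hPj,
      erase_insert (fun h => π.empty_notMem_parts (mem_of_mem_erase h)), insert_erase (hPj ▸ hP)]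
  · right
    have hCP : (π.part j).erase j ∉ π.parts.erase (π.part j) := fun h => by
      obtain ⟨x, hx⟩ := nonempty_iff_ne_empty.2 hC
      exact (mem_erase.1 h).1 (π.eq_of_mem_parts (mem_of_mem_erase h) hP hx (mem_of_mem_erase hx))
    have hmem : (π.part j).erase j ∈ (π.restrict (subset_insert j s)).parts := by
      rw [parts_restrict_insert hj]
      exact mem_erase.2 ⟨hC, mem_insert_self _ _⟩
    refine ⟨_, hmem, ?_⟩
    ext1
    rw [parts_insertIntoPart, parts_restrict_insert hj, erase_eq_of_notMem (a := ∅),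
      erase_insert hCP, insert_erase hjP, insert_erase hP]
    exact mem_insert.not.2
      (not_or.2 ⟨Ne.symm hC, fun h => π.empty_notMem_parts (mem_of_mem_erase h)⟩)

lemma filter_restrict_eq [DecidableEq (Finpartition (insert j s))] (σ : Finpartition s)
    (hj : j ∉ s) :
    univ.filter (fun π : Finpartition (insert j s) => π.restrict (subset_insert j s) = σ) =
      insert (σ.addSingleton hj) (univ.image fun C : σ.parts => σ.insertIntoPart hj C.2) := by
  ext π
  simp only [mem_filter, mem_univ, true_and, mem_insert, mem_image]
  constructor
  · rintro rfl
    rcases eq_addSingleton_or_insertIntoPart hj π with h | ⟨C, hC, h⟩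
    · exact Or.inl h
    · exact Or.inr ⟨⟨C, hC⟩, h.symm⟩
  · rintro (rfl | ⟨C, rfl⟩)
    · exact σ.restrict_addSingleton hj
    · exact σ.restrict_insertIntoPart hj C.2

lemma sum_insert_eq_sum_addSingleton_add {M : Type*} [AddCommMonoid M] (hj : j ∉ s)
    (f : Finpartition (insert j s) → M) :
    ∑ π, f π = ∑ σ : Finpartition s,
      (f (σ.addSingleton hj) + ∑ C : σ.parts, f (σ.insertIntoPart hj C.2)) := by
  classical
  rw [← sum_fiberwise univ (fun π => π.restrict (subset_insert j s))]
  refine sum_congr rfl fun σ _ => ?_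
  rw [filter_restrict_eq σ hj, sum_insert,
    sum_image fun C _ D _ h => σ.insertIntoPart_injective hj h]
  simp only [mem_image, mem_univ, true_and, not_exists]
  exact fun C h => σ.addSingleton_ne_insertIntoPart hj C.2 h.symm

section Product

variable {R : Type*} [CommMonoid R] (σ : Finpartition s) (μ : Finset α → R)

lemma prod_parts_erase (hj : j ∉ s) : ∏ B ∈ σ.parts, μ (B.erase j) = ∏ B ∈ σ.parts, μ B :=
  prod_congr rfl fun B hB => by rw [erase_eq_of_notMem (σ.notMem_of_mem_parts hj hB)]

lemma prod_parts_addSingleton_erase (hμ : μ ∅ = 1) (hj : j ∉ s) :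
    ∏ B ∈ (σ.addSingleton hj).parts, μ (B.erase j) = ∏ B ∈ σ.parts, μ B := by
  rw [parts_addSingleton, prod_insert (σ.singleton_notMem_parts hj), erase_singleton, hμ, one_mul,
    σ.prod_parts_erase μ hj]

lemma prod_parts_insertIntoPart_erase (hj : j ∉ s) {C : Finset α} (hC : C ∈ σ.parts) :
    ∏ B ∈ (σ.insertIntoPart hj hC).parts, μ (B.erase j) = ∏ B ∈ σ.parts, μ B := by
  rw [parts_insertIntoPart, prod_insert (σ.insert_notMem_erase_parts hj C),
    erase_insert (σ.notMem_of_mem_parts hj hC), ← mul_prod_erase _ μ hC]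
  exact congr_arg _ <| prod_congr rfl fun B hB => by
    rw [erase_eq_of_notMem (σ.notMem_of_mem_parts hj (mem_of_mem_erase hB))]

end Product

end Finpartition

def cumulantCoeff (R : Type*) [Ring R] (m : ℕ) : R := (-1) ^ (m - 1) * (Nat.factorial (m - 1) : R)

lemma cumulantCoeff_add_two_add (R : Type*) [CommRing R] (k : ℕ) :
    cumulantCoeff R (k + 2) + (k + 1) * cumulantCoeff R (k + 1) = 0 := by
  rw [cumulantCoeff, cumulantCoeff, Nat.add_sub_cancel, show k + 2 - 1 = k + 1 by omega,
    Nat.factorial_succ]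
  push_cast
  ring

/-- The joint cumulant of `X_j = 1` with further variables vanishes. -/
theorem sum_cumulantCoeff_mul_prod_erase {α R : Type*} [DecidableEq α] [CommRing R]
    {s : Finset α} {j : α} (μ : Finset α → R) (hμ : μ ∅ = 1) (hj : j ∉ s) (hs : s.Nonempty) :
    ∑ π : Finpartition (insert j s), cumulantCoeff R #π.parts * ∏ B ∈ π.parts, μ (B.erase j) =
      0 := by
  rw [Finpartition.sum_insert_eq_sum_addSingleton_add hj]
  refine sum_eq_zero fun σ _ => ?_
  obtain ⟨k, hk⟩ : ∃ k, #σ.parts = k + 1 :=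
    Nat.exists_eq_add_one.2 (card_pos.2 (σ.parts_nonempty hs.ne_empty))
  simp only [σ.card_parts_addSingleton, σ.card_parts_insertIntoPart,
    σ.prod_parts_addSingleton_erase μ hμ, σ.prod_parts_insertIntoPart_erase, hk, sum_const,
    card_univ, Fintype.card_coe, nsmul_eq_mul]
  push_cast
  linear_combination (∏ B ∈ σ.parts, μ B) * cumulantCoeff_add_two_add R k

section Moment

variable {n : ℕ} (p : Finset (Fin n) → ℂ)

lemma sum_comp_symmDiff (J : Finset (Fin n)) : ∑ K, p (symmDiff K J) = ∑ K, p K :=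
  Fintype.sum_equiv ((symmDiff_left_involutive J).toPerm _) _ _ fun _ => rfl

lemma moment_empty (hp : ∑ K, p K = 1) : moment p ∅ = 1 := by
  simpa [moment] using hp

lemma moment_comp_symmDiff (J B : Finset (Fin n)) :
    moment (fun K => p (symmDiff K J)) B = ∑ M with B ⊆ symmDiff M J, p M := by
  simp only [moment, sum_filter]
  exact Fintype.sum_equiv ((symmDiff_left_involutive J).toPerm _) _ _ fun L => by
    simp [symmDiff_symmDiff_cancel_right]

lemma moment_comp_symmDiff_singleton_of_notMem {j : Fin n} {B : Finset (Fin n)} (hj : j ∉ B) :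
    moment (fun K => p (symmDiff K {j})) B = moment p B := by
  rw [moment_comp_symmDiff]
  simp only [subset_symmDiff_singleton_iff_of_notMem hj, moment]

lemma moment_comp_symmDiff_singleton_of_mem {j : Fin n} {B : Finset (Fin n)} (hj : j ∈ B) :
    moment (fun K => p (symmDiff K {j})) B = moment p (B.erase j) - moment p B := by
  rw [eq_sub_iff_add_eq', moment_comp_symmDiff, moment, moment,
    ← sum_filter_add_sum_filter_not {M | B.erase j ⊆ M} (fun M => j ∈ M), filter_filter,
    filter_filter]
  congr 1 <;> refine sum_congr (filter_congr fun M _ => ?_) fun _ _ => rfl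
  · conv_lhs => rw [← insert_erase hj, insert_subset_iff, and_comm]
  · exact subset_symmDiff_singleton_iff_of_mem hj

lemma moment_singleton_comp_symmDiff (hp : ∑ K, p K = 1) (i : Fin n) (J : Finset (Fin n)) :
    moment (fun K => p (symmDiff K J)) {i} = if i ∈ J then 1 - moment p {i} else moment p {i} := by
  rw [moment_comp_symmDiff]
  simp only [singleton_subset_iff, mem_symmDiff]
  split_ifs with hi
  · rw [eq_sub_iff_add_eq', ← hp, moment, ← sum_filter_add_sum_filter_not univ (i ∈ ·)]
    simp [hi]
  · simp [moment, hi]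

end Moment

section Cumulant

variable {n : ℕ} (p : Finset (Fin n) → ℂ)

lemma cumulant_eq_sum_cumulantCoeff (μ : Finset (Fin n) → ℂ) (I : Finset (Fin n)) :
    cumulant μ I = ∑ π : Finpartition I, cumulantCoeff ℂ #π.parts * ∏ B ∈ π.parts, μ B := rfl

lemma cumulant_singleton (μ : Finset (Fin n) → ℂ) (i : Fin n) : cumulant μ {i} = μ {i} := by
  -- `P` is a spurious argument of `IsAtom.uniqueFinpartition`
  have := (isAtom_singleton i).uniqueFinpartition (P := ⊥)
  rw [cumulant, Fintype.sum_subsingleton _ (Finpartition.indiscrete (singleton_ne_empty i))]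
  simp

lemma cumulant_moment_comp_symmDiff_singleton_of_notMem {j : Fin n} {I : Finset (Fin n)}
    (hj : j ∉ I) : cumulant (moment fun K => p (symmDiff K {j})) I = cumulant (moment p) I :=
  sum_congr rfl fun π _ => congr_arg _ <| prod_congr rfl fun _ hB =>
    moment_comp_symmDiff_singleton_of_notMem p fun h => hj (π.le hB h)

lemma cumulant_moment_comp_symmDiff_singleton_of_mem (hp : ∑ K, p K = 1) {j : Fin n}
    {I : Finset (Fin n)} (hj : j ∈ I) (hI : 2 ≤ #I) :
    cumulant (moment fun K => p (symmDiff K {j})) I = -cumulant (moment p) I := by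
  obtain ⟨s, hjs, rfl⟩ : ∃ s, j ∉ s ∧ I = insert j s :=
    ⟨I.erase j, notMem_erase j I, (insert_erase hj).symm⟩
  have hs : s.Nonempty := by
    rw [← card_pos]
    rw [card_insert_of_notMem hjs] at hI
    omega
  have hsplit (π : Finpartition (insert j s)) :
      ∏ B ∈ π.parts, moment (fun K => p (symmDiff K {j})) B =
        ∏ B ∈ π.parts, moment p (B.erase j) - ∏ B ∈ π.parts, moment p B := by
    have hP := π.part_mem.2 (mem_insert_self j s)
    have hflip : ∏ B ∈ π.parts.erase (π.part j), moment (fun K => p (symmDiff K {j})) B =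
        ∏ B ∈ π.parts.erase (π.part j), moment p B :=
      prod_congr rfl fun B hB =>
        moment_comp_symmDiff_singleton_of_notMem p (π.notMem_of_mem_erase_part hB)
    have herase : ∏ B ∈ π.parts.erase (π.part j), moment p (B.erase j) =
        ∏ B ∈ π.parts.erase (π.part j), moment p B :=
      prod_congr rfl fun B hB => by rw [erase_eq_of_notMem (π.notMem_of_mem_erase_part hB)]
    rw [← mul_prod_erase _ _ hP, ← mul_prod_erase _ (fun B => moment p (B.erase j)) hP,
      ← mul_prod_erase π.parts (moment p) hP, hflip, herase,
      moment_comp_symmDiff_singleton_of_mem p (π.mem_part_self.2 (mem_insert_self j s)), sub_mul]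
  simp only [cumulant_eq_sum_cumulantCoeff, hsplit, mul_sub, sum_sub_distrib,
    sum_cumulantCoeff_mul_prod_erase _ (moment_empty p hp) hjs hs, zero_sub]

lemma cumulant_moment_comp_symmDiff (J : Finset (Fin n)) (hp : ∑ K, p K = 1)
    {I : Finset (Fin n)} (hI : 2 ≤ #I) :
    cumulant (moment fun K => p (symmDiff K J)) I = (-1) ^ #(J ∩ I) * cumulant (moment p) I := by
  induction J using Finset.induction_on generalizing p with
  | empty =>
    simp_rw [empty_inter, card_empty, pow_zero, one_mul, ← bot_eq_empty, symmDiff_bot]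
  | insert j J hjJ ih =>
    have hcomp : (fun K => p (symmDiff K (insert j J))) =
        fun K => (fun M => p (symmDiff M {j})) (symmDiff K J) := by
      funext K
      dsimp only
      rw [symmDiff_assoc, Disjoint.symmDiff_eq_sup (disjoint_singleton_right.2 hjJ), sup_eq_union,
        union_singleton]
    rw [hcomp, ih _ ((sum_comp_symmDiff p {j}).trans hp)]
    by_cases hjI : j ∈ I
    · rw [cumulant_moment_comp_symmDiff_singleton_of_mem p hp hjI hI, insert_inter_of_mem hjI,
        card_insert_of_notMem fun h => hjJ (mem_inter.1 h).1, pow_succ]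
      ring
    · rw [cumulant_moment_comp_symmDiff_singleton_of_notMem p hjI, insert_inter_of_notMem hjI]

end Cumulant

theorem cumulants_under_bit_swap_general {n : ℕ}
    (p : Finset (Fin n) → ℂ) (hp : ∑ I : Finset (Fin n), p I = 1)
    (J : Finset (Fin n))
    (p' : Finset (Fin n) → ℂ) (hp' : ∀ I : Finset (Fin n), p' I = p (symmDiff I J)) :
    (∀ I : Finset (Fin n), 2 ≤ I.card →
        cumulant (moment p') I =
          (if Odd (J ∩ I).card then -cumulant (moment p) I else cumulant (moment p) I)) ∧
    (∀ i : Fin n,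
        cumulant (moment p') {i} =
          (if i ∈ J then 1 - cumulant (moment p) {i} else cumulant (moment p) {i})) := by
  obtain rfl : p' = fun K => p (symmDiff K J) := funext hp'
  refine ⟨fun I hI => ?_, fun i => ?_⟩
  · rw [cumulant_moment_comp_symmDiff p J hp hI]
    split_ifs with hodd
    · rw [hodd.neg_one_pow, neg_one_mul]
    · rw [(Nat.not_odd_iff_even.1 hodd).neg_one_pow, one_mul]
  · simp only [cumulant_singleton, moment_singleton_comp_symmDiff p hp]

/-- the hypercube symmetry `ρ_J : p_I ↦ p_{I Δ J}` acts on cumulants by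
`k_I ↦ (−1)^{|J∩I|} k_I` for `|I| ≥ 2` and `k_i ↦ 1 − k_i` for `i ∈ J`,
`k_i ↦ k_i` otherwise. -/
theorem cumulants_under_bit_swap {n : ℕ} (hn : 1 ≤ n)
    (p : Finset (Fin n) → ℂ) (hp : ∑ I : Finset (Fin n), p I = 1)
    (J : Finset (Fin n))
    (p' : Finset (Fin n) → ℂ) (hp' : ∀ I : Finset (Fin n), p' I = p (symmDiff I J)) :
    (∀ I : Finset (Fin n), 2 ≤ I.card →
        cumulant (moment p') I =
          (if Odd (J ∩ I).card then -cumulant (moment p) I else cumulant (moment p) I)) ∧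
    (∀ i : Fin n,
        cumulant (moment p') {i} =
          (if i ∈ J then 1 - cumulant (moment p) {i} else cumulant (moment p) {i})) :=
  cumulants_under_bit_swap_general p hp J p' hp'
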